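/- arXiv:1502.04340 — 6 statements merged into one kernel-verified Lean document; each statement's English description precedes it below -/
import Mathlib

section
/- Let E = {0,...,n-1}^d with n ≥ 2, d ≥ 1, and let f : E → {0,1} be such that the convex hull P of M_1(f) has at most 2 vertices (and M_1(f) is nonempty) and P contains no point of M_0(f). Then for every k ≥ 2, f is a k-threshold function: there exist real coefficients a_{ij} such that M_1(f) = {x ∈ E : Σ_j a_{ij} x_j ≤ a_{i0} for i = 1,...,k}. -/
/-!
By Krein–Milman, `P(f)` is the convex hull of its at most two extreme points, hence a segment
`[a, b]`; as `P(f)` contains no point of `M₀(f)`, `M₁(f)` is the set of lattice points on `[a, b]`.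
Among the points of a finite set, those on `[a, b]` are cut out by one double inequality
`lo ≤ ℓ x ≤ hi`. Take a functional `φ` vanishing on the direction `b - a` but at no `x - a` off
that line (a vector space over an infinite field is not a finite union of proper subspaces), and
`ψ` with `ψ (b - a) = 1`. Then `ℓ = φ + ε ψ` works for small `ε > 0`: on the line `ℓ` restricts to
`ε ψ`, while off it `|φ (x - a)|` is bounded below by a constant that `ε ψ` cannot compensate.
-/

open Finset in
/-- The embedding of the integer cube `{0,…,n-1}^d` into `ℝ^d`. -/
def toR {d n : ℕ} (x : Fin d → Fin n) : Fin d → ℝ := fun i => (x i : ℝ)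

open Finset in
/-- `f` is a `k`-threshold function on `{0,…,n-1}^d`: its `1`-set is the solution
set of a system of `k` linear inequalities. -/
def IsKThreshold (d n k : ℕ) (f : (Fin d → Fin n) → Bool) : Prop :=
  ∃ (a : Fin k → ℝ) (b : Fin k → Fin d → ℝ),
    ∀ x, f x = true ↔ ∀ i, ∑ j, b i j * (x j : ℝ) ≤ a i

/-- The class `T(d,n,k)` of `k`-threshold functions. -/
def TClass (d n k : ℕ) : Set ((Fin d → Fin n) → Bool) := {f | IsKThreshold d n k f}

/-- The convex hull of the `1`-set of `f` (that is, `P(f)`). -/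
def hullOne (d n : ℕ) (f : (Fin d → Fin n) → Bool) : Set (Fin d → ℝ) :=
  convexHull ℝ (toR '' {x | f x = true})

/-- `f` belongs to `T(d,n,*)`: its `1`-set equals `Conv(M₁(f)) ∩ E_n^d`. -/
def LatticeConvex {d n : ℕ} (f : (Fin d → Fin n) → Bool) : Prop :=
  ∀ x, f x = true ↔ toR x ∈ hullOne d n f

/-- The class `T(d,n,*)` of all `k`-threshold functions for all `k`. -/
def TStar (d n : ℕ) : Set ((Fin d → Fin n) → Bool) := {f | LatticeConvex f}

/-- `T` is a teaching set of `f` with respect to the class `C`. -/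
def TeachingSet {α : Type*} (C : Set (α → Bool)) (f : α → Bool) (T : Set α) : Prop :=
  ∀ g ∈ C, (∀ x ∈ T, g x = f x) → g = f

/-- `x` is an essential point of `f` with respect to the class `D`. -/
def Essential {α : Type*} (D : Set (α → Bool)) (f : α → Bool) (x : α) : Prop :=
  ∃ g ∈ D, g x ≠ f x ∧ ∀ y, y ≠ x → g y = f y

/-- The set of vertices of `P(f)` (as lattice points). -/
def VertSet (d n : ℕ) (f : (Fin d → Fin n) → Bool) : Set (Fin d → Fin n) :=
  {x | toR x ∈ Set.extremePoints ℝ (hullOne d n f)}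

/-- The set `D(f) = {x ∈ M₀(f) : Conv(P(f) ∪ {x}) ∩ M₀(f) = {x}}`. -/
def DSet (d n : ℕ) (f : (Fin d → Fin n) → Bool) : Set (Fin d → Fin n) :=
  {x | f x = false ∧
    ∀ y, toR y ∈ convexHull ℝ (toR '' {z | f z = true} ∪ {toR x}) → f y = false → y = x}

open Set Filter Topology

theorem exists_pos_forall_eq_zero_and_mem_Icc_iff {ι : Type*} [Finite ι] (s t : ι → ℝ) :
    ∃ ε > 0, ∀ i, (s i = 0 ∧ t i ∈ Icc 0 1 ↔ s i + ε * t i ∈ Icc 0 ε) := by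
  have h : ∀ i, ∀ᶠ ε in 𝓝[>] (0 : ℝ), (s i = 0 ∧ t i ∈ Icc 0 1 ↔ s i + ε * t i ∈ Icc 0 ε) := by
    intro i
    have hlim : Tendsto (fun ε : ℝ => s i + ε * t i) (𝓝[>] 0) (𝓝 (s i)) :=
      tendsto_nhdsWithin_of_tendsto_nhds <| (by fun_prop : Continuous _).tendsto' _ _ (by simp)
    have hlim' : Tendsto (fun ε : ℝ => s i + ε * t i - ε) (𝓝[>] 0) (𝓝 (s i)) :=
      tendsto_nhdsWithin_of_tendsto_nhds <| (by fun_prop : Continuous _).tendsto' _ _ (by simp)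
    rcases lt_trichotomy (s i) 0 with hs | hs | hs
    · filter_upwards [hlim.eventually (gt_mem_nhds hs)] with ε hε
      simp only [hs.ne, false_and, false_iff, mem_Icc, not_and_or, not_le]
      exact Or.inl hε
    · filter_upwards [self_mem_nhdsWithin] with ε (hε : 0 < ε)
      simp only [hs, zero_add, true_and, mem_Icc]
      constructor
      · rintro ⟨h0, h1⟩; exact ⟨by positivity, by nlinarith⟩
      · rintro ⟨h0, h1⟩
        exact ⟨nonneg_of_mul_nonneg_right h0 hε, (mul_le_iff_le_one_right hε).1 h1⟩
    · filter_upwards [hlim'.eventually (lt_mem_nhds hs)] with ε hε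
      simp only [hs.ne', false_and, false_iff, mem_Icc, not_and_or, not_le]
      exact Or.inr (by linarith)
  obtain ⟨ε, hεi, hεpos⟩ := ((eventually_all.2 h).and self_mem_nhdsWithin).exists
  exact ⟨ε, hεpos, hεi⟩

theorem Submodule.exists_dual_le_ker_forall_apply_ne_zero {K V : Type*} [Field K] [Infinite K]
    [AddCommGroup V] [Module K V] (W : Submodule K V) {s : Set V} (hs : s.Finite) :
    ∃ f : Module.Dual K V, W ≤ LinearMap.ker f ∧ ∀ x ∈ s, x ∉ W → f x ≠ 0 := by
  have : Finite {x // x ∈ s ∧ x ∉ W} := (hs.subset fun _ hx => hx.1).to_subtype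
  obtain ⟨g, hg⟩ := Module.exists_dual_forall_apply_ne_zero (K := K)
    (fun x : {x // x ∈ s ∧ x ∉ W} => W.mkQ x) fun x => by simpa using x.2.2
  exact ⟨g.comp W.mkQ, fun x hx => by simp [(Submodule.Quotient.mk_eq_zero W).2 hx],
    fun x hx hxW => hg ⟨x, hx, hxW⟩⟩

theorem exists_dual_mem_segment_iff {E : Type*} [AddCommGroup E] [Module ℝ E] (p q : E) :
    ∃ ψ : Module.Dual ℝ E,
      ∀ x, x ∈ segment ℝ p q ↔ x - p ∈ ℝ ∙ (q - p) ∧ ψ (x - p) ∈ Icc 0 1 := by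
  rcases eq_or_ne p q with rfl | hpq
  · exact ⟨0, fun x => by simp [sub_eq_zero]⟩
  obtain ⟨ψ, hψ⟩ := Module.Projective.exists_dual_eq_one ℝ (sub_ne_zero.2 hpq.symm)
  refine ⟨ψ, fun x => ?_⟩
  rw [segment_eq_image', Submodule.mem_span_singleton]
  constructor
  · rintro ⟨θ, hθ, rfl⟩
    simpa [hψ] using hθ
  · rintro ⟨⟨c, hc⟩, hψx⟩
    rw [← hc, map_smul, hψ, smul_eq_mul, mul_one] at hψx
    exact ⟨c, hψx, show p + c • (q - p) = x by rw [hc, add_sub_cancel]⟩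

theorem exists_dual_mem_Icc_iff_mem_segment {E : Type*} [AddCommGroup E] [Module ℝ E]
    {S : Set E} (hS : S.Finite) (p q : E) :
    ∃ (ℓ : Module.Dual ℝ E) (a b : ℝ), ∀ x ∈ S, x ∈ segment ℝ p q ↔ ℓ x ∈ Icc a b := by
  obtain ⟨φ, hφ, hφS⟩ :=
    (ℝ ∙ (q - p)).exists_dual_le_ker_forall_apply_ne_zero (hS.image (· - p))
  obtain ⟨ψ, hψ⟩ := exists_dual_mem_segment_iff p q
  have hchar : ∀ x ∈ S, x ∈ segment ℝ p q ↔ φ (x - p) = 0 ∧ ψ (x - p) ∈ Icc 0 1 := by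
    intro x hx
    rw [hψ]
    refine and_congr_left' ⟨fun h => hφ h, fun h => ?_⟩
    by_contra hxW
    exact hφS _ (mem_image_of_mem _ hx) hxW h
  have : Finite S := hS.to_subtype
  obtain ⟨ε, hε, hεS⟩ := exists_pos_forall_eq_zero_and_mem_Icc_iff
    (fun x : S => φ (x - p)) (fun x : S => ψ (x - p))
  refine ⟨φ + ε • ψ, (φ + ε • ψ) p, (φ + ε • ψ) p + ε, fun x hx => ?_⟩
  have hℓx : (φ + ε • ψ) x = (φ + ε • ψ) p + (φ (x - p) + ε * ψ (x - p)) := by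
    simp only [LinearMap.add_apply, LinearMap.smul_apply, map_sub, smul_eq_mul]
    ring
  rw [hchar x hx, hεS ⟨x, hx⟩, hℓx]
  simp only [mem_Icc]
  constructor <;> rintro ⟨h₁, h₂⟩ <;> constructor <;> linarith

theorem IsCompact.exists_eq_segment_of_extremePoints_subset_pair {E : Type*} [AddCommGroup E]
    [Module ℝ E] [TopologicalSpace E] [T2Space E] [IsTopologicalAddGroup E] [ContinuousSMul ℝ E]
    [LocallyConvexSpace ℝ E] {K : Set E} (hK : IsCompact K) (hKc : Convex ℝ K)
    (hne : K.Nonempty) {u v : E} (huv : K.extremePoints ℝ ⊆ {u, v}) :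
    ∃ a b, K = segment ℝ a b := by
  have hhull : convexHull ℝ (K.extremePoints ℝ) = K :=
    (((toFinite {u, v}).subset huv).isClosed_convexHull ℝ).closure_eq.symm.trans
      (closure_convexHull_extremePoints hK hKc)
  rcases subset_pair_iff_eq.1 huv with h | h | h | h
  · rw [← hhull, h, convexHull_empty] at hne
    exact absurd hne not_nonempty_empty
  · exact ⟨u, u, by rw [← hhull, h, convexHull_singleton, segment_same]⟩
  · exact ⟨v, v, by rw [← hhull, h, convexHull_singleton, segment_same]⟩
  · exact ⟨u, v, by rw [← hhull, h, convexHull_pair]⟩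

theorem isKThreshold_of_forall_iff_mem_Icc {d n k : ℕ} (hk : 2 ≤ k)
    {f : (Fin d → Fin n) → Bool} (w : Fin d → ℝ) (lo hi : ℝ)
    (h : ∀ x, f x = true ↔ ∑ j, w j * (x j : ℝ) ∈ Icc lo hi) : IsKThreshold d n k f := by
  obtain ⟨m, rfl⟩ := Nat.exists_eq_add_of_le' hk
  refine ⟨Fin.cons hi (Fin.cons (-lo) 0), Fin.cons w (Fin.cons (-w) 0), fun x => ?_⟩
  simp [Fin.forall_fin_succ, h x, and_comm]

theorem stmt4_general (d n : ℕ) (f : (Fin d → Fin n) → Bool)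
    (hne : ∃ x, f x = true)
    (u v : Fin d → ℝ)
    (hvert : Set.extremePoints ℝ (hullOne d n f) ⊆ {u, v})
    (hdisj : ∀ x, f x = false → toR x ∉ hullOne d n f) :
    ∀ k, 2 ≤ k → IsKThreshold d n k f := by
  intro k hk
  obtain ⟨x₀, hx₀⟩ := hne
  have hsub : toR '' {x | f x = true} ⊆ hullOne d n f := subset_convexHull ℝ _
  obtain ⟨a, b, hseg⟩ :=
    ((toFinite _).isCompact_convexHull ℝ).exists_eq_segment_of_extremePoints_subset_pair
      (convex_convexHull ℝ _) ⟨toR x₀, hsub ⟨x₀, hx₀, rfl⟩⟩ hvert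
  have hchar : ∀ x, f x = true ↔ toR x ∈ segment ℝ a b := by
    intro x
    rw [← hseg]
    refine ⟨fun hx => hsub ⟨x, hx, rfl⟩, fun hx => ?_⟩
    by_contra h
    exact hdisj x (by simpa using h) hx
  obtain ⟨ℓ, lo, hi, hℓ⟩ := exists_dual_mem_Icc_iff_mem_segment (finite_range toR) a b
  refine isKThreshold_of_forall_iff_mem_Icc hk (fun j => ℓ fun i => if j = i then 1 else 0) lo hi
    fun x => ?_
  rw [hchar, hℓ _ (mem_range_self x), ℓ.pi_apply_eq_sum_univ]
  simp [toR, mul_comm]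

theorem stmt4 (d n : ℕ) (hd : 1 ≤ d) (hn : 2 ≤ n) (f : (Fin d → Fin n) → Bool)
    (hne : ∃ x, f x = true)
    (u v : Fin d → ℝ)
    (hvert : Set.extremePoints ℝ (hullOne d n f) ⊆ {u, v})
    (hdisj : ∀ x, f x = false → toR x ∉ hullOne d n f) :
    ∀ k, 2 ≤ k → IsKThreshold d n k f :=
  stmt4_general d n f hne u v hvert hdisj
end

section
/- For d ≥ 1, n ≥ 2, k ≥ 2, the teaching dimension of the class T(d,n,k) of k-threshold functions on {0,...,n-1}^d equals n^d. That is, there is a function in the class whose smallest teaching set has size n^d. -/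
open Finset in
lemma myL_inj {d n : ℕ} (y z : Fin d → Fin n)
    (h : ∑ j : Fin d, (n:ℝ)^(j.val) * (y j : ℝ) = ∑ j : Fin d, (n:ℝ)^(j.val) * (z j : ℝ)) : y = z := by
  have hnat : (∑ j : Fin d, (y j : ℕ) * n ^ (j:ℕ)) = ∑ j : Fin d, (z j : ℕ) * n ^ (j:ℕ) := by
    have : ((∑ j : Fin d, (y j : ℕ) * n ^ (j:ℕ) : ℕ) : ℝ)
        = ((∑ j : Fin d, (z j : ℕ) * n ^ (j:ℕ) : ℕ) : ℝ) := by
      push_cast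
      calc (∑ j : Fin d, (y j : ℝ) * (n:ℝ) ^ (j:ℕ))
          = ∑ j : Fin d, (n:ℝ)^(j:ℕ) * (y j : ℝ) := by simp [mul_comm]
        _ = ∑ j : Fin d, (n:ℝ)^(j:ℕ) * (z j : ℝ) := h
        _ = ∑ j : Fin d, (z j : ℝ) * (n:ℝ) ^ (j:ℕ) := by simp [mul_comm]
    exact_mod_cast this
  apply finFunctionFinEquiv.injective
  apply Fin.val_injective
  rw [finFunctionFinEquiv_apply, finFunctionFinEquiv_apply]
  exact hnat

open Finset in
lemma my_singleton_thresh (d n k : ℕ) (hk : 2 ≤ k) (x : Fin d → Fin n) :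
    IsKThreshold d n k (fun y => decide (y = x)) := by
  set L : (Fin d → Fin n) → ℝ := fun y => ∑ j : Fin d, (n:ℝ)^(j.val) * (y j : ℝ) with hL
  refine ⟨fun i => if (i:ℕ) = 0 then L x else -(L x),
          fun i j => if (i:ℕ) = 0 then (n:ℝ)^(j.val) else -((n:ℝ)^(j.val)), ?_⟩
  intro y
  simp only [decide_eq_true_eq]
  constructor
  · rintro rfl i
    by_cases hi : (i:ℕ) = 0 <;> simp [hi, hL, neg_mul]
  · intro hineq
    have h0 := hineq ⟨0, by omega⟩
    have h1 := hineq ⟨1, by omega⟩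
    simp only [Fin.val_mk, if_pos rfl] at h0
    simp only [Fin.val_mk, if_neg one_ne_zero] at h1
    have h1' : L x ≤ L y := by
      simp only [hL]
      have : ∑ j : Fin d, -((n:ℝ)^(j.val)) * (y j : ℝ)
          = -∑ j : Fin d, (n:ℝ)^(j.val) * (y j : ℝ) := by
        rw [← Finset.sum_neg_distrib]
        congr 1; funext j; ring
      rw [this] at h1
      linarith
    exact myL_inj y x (le_antisymm h0 h1')

/-- The teaching dimension of the class `T(d,n,k)`, `k ≥ 2`, equals `n^d`:
every function has a teaching set of size at most `n^d`, and some function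
has no teaching set of size smaller than `n^d`. -/
theorem stmt5 (d n k : ℕ) (hd : 1 ≤ d) (hn : 2 ≤ n) (hk : 2 ≤ k) :
    (∀ f : (Fin d → Fin n) → Bool, IsKThreshold d n k f →
      ∃ T : Set (Fin d → Fin n), TeachingSet (TClass d n k) f T ∧ T.ncard ≤ n ^ d) ∧
    (∃ f : (Fin d → Fin n) → Bool, IsKThreshold d n k f ∧
      ∀ T : Set (Fin d → Fin n), TeachingSet (TClass d n k) f T → n ^ d ≤ T.ncard) := by
  constructor
  · intro f hf
    refine ⟨Set.univ, ?_, ?_⟩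
    · intro g hg hagree
      funext x
      exact hagree x (Set.mem_univ x)
    · rw [Set.ncard_univ, Nat.card_eq_fintype_card, Fintype.card_fun]
      simp
  · refine ⟨fun _ => false, ?_, ?_⟩
    · refine ⟨fun _ => -1, fun _ _ => 0, ?_⟩
      intro x
      constructor
      · intro h; cases h
      · intro h
        have := h ⟨0, by omega⟩
        simp at this
        linarith
    · intro T hT
      have hTuniv : T = Set.univ := by
        by_contra hne
        obtain ⟨x, hx⟩ : ∃ x, x ∉ T := by
          by_contra h
          push_neg at h
          exact hne (Set.eq_univ_of_forall h)
        have hg := hT (fun y => decide (y = x)) (my_singleton_thresh d n k hk x)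
        have : (fun y => decide (y = x)) = (fun _ => false) := by
          apply hg
          intro z hz
          have : z ≠ x := fun h => hx (h ▸ hz)
          simp [this]
        have := congrFun this x
        simp at this
      rw [hTuniv, Set.ncard_univ, Nat.card_eq_fintype_card, Fintype.card_fun]
      simp
end

section
/- Let d ≥ 2, n ≥ 2 and let f ∈ T(d,n,*) with M_1(f) ≠ ∅. Let P(f) = Conv(M_1(f)), Vert(P(f)) its vertex set, and D(f) = {x ∈ M_0(f) : Conv(P(f) ∪ {x}) ∩ M_0(f) = {x}}. Then the set of essential points of f with respect to T(d,n,*) equals Vert(P(f)) ∪ D(f), and this set is the unique minimal teaching set of f with respect to T(d,n,*). -/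
/-!
Vertices of `P(f)` and points of `D(f)` are essential: switching a vertex off, or a point of
`D(f)` on, keeps the function lattice-convex, because a vertex is not in the hull of the other
`1`-points and `Conv(P(f) ∪ {x})` contains no other `0`-point. Conversely, let `g ∈ T(d,n,*)`
agree with `f` on `Vert(P(f)) ∪ D(f)`. Then `P(f) ⊆ P(g)`, so `f ≤ g`; and if `g` had a `1`-point
that is a `0`-point of `f`, one such point `x` with `Conv(P(f) ∪ {x})` minimal would lie in
`D(f)`. Hence this set is a teaching set, and it lies in every teaching set since it consists of
essential points.
-/

open Set

theorem Essential.mem_of_teachingSet {α : Type*} {C : Set (α → Bool)} {f : α → Bool} {x : α}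
    {T : Set α} (hx : Essential C f x) (hT : TeachingSet C f T) : x ∈ T := by
  obtain ⟨g, hg, hgx, hgy⟩ := hx
  by_contra hxT
  exact hgx (congrFun (hT g hg fun y hy => hgy y (ne_of_mem_of_not_mem hy hxT)) x)

theorem Set.Finite.convexHull_extremePoints_convexHull {E : Type*} [AddCommGroup E]
    [Module ℝ E] [TopologicalSpace E] [T2Space E] [IsTopologicalAddGroup E]
    [ContinuousSMul ℝ E] [LocallyConvexSpace ℝ E] {s : Set E} (hs : s.Finite) :
    convexHull ℝ ((convexHull ℝ s).extremePoints ℝ) = convexHull ℝ s := by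
  have hfin : ((convexHull ℝ s).extremePoints ℝ).Finite :=
    hs.subset extremePoints_convexHull_subset
  rw [← (hfin.isClosed_convexHull (𝕜 := ℝ)).closure_eq]
  exact closure_convexHull_extremePoints (hs.isCompact_convexHull (𝕜 := ℝ))
    (convex_convexHull ℝ s)

theorem notMem_convexHull_sdiff_of_mem_extremePoints {E : Type*} [AddCommGroup E] [Module ℝ E]
    {s : Set E} {v : E} (hv : v ∈ (convexHull ℝ s).extremePoints ℝ) :
    v ∉ convexHull ℝ (s \ {v}) := fun h =>
  ((convex_convexHull ℝ s).mem_extremePoints_iff_mem_sdiff_convexHull_sdiff.1 hv).2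
    (convexHull_mono (sdiff_subset_sdiff_left (subset_convexHull ℝ s)) h)

theorem eq_of_mem_convexHull_insert {E : Type*} [AddCommGroup E] [Module ℝ E] {s : Set E}
    {x y : E} (hs : s.Nonempty) (hx : x ∉ convexHull ℝ s)
    (hxy : y ∈ convexHull ℝ (insert x s)) (hyx : x ∈ convexHull ℝ (insert y s)) : x = y := by
  rw [convexHull_insert hs, convexJoin_singleton_left, mem_iUnion₂] at hxy hyx
  obtain ⟨p, hp, a, b, ha, hb, hab, rfl⟩ := hxy
  obtain ⟨q, hq, c, e, hc, he, hce, hxe⟩ := hyx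
  by_cases hca : c * a = 1
  · obtain rfl : a = 1 := by nlinarith
    obtain rfl : b = 0 := by linarith
    simp
  have hca' : 0 < 1 - c * a := by
    have : c * a ≤ 1 := by nlinarith
    exact sub_pos.2 (lt_of_le_of_ne this hca)
  -- `x = c (a x + b p) + e q` solves to a convex combination of `p` and `q`.
  have hx_eq : (1 - c * a) • x = (c * b) • p + e • q := by
    rw [← sub_eq_zero, ← sub_eq_zero.2 hxe.symm]; module
  refine absurd ?_ hx
  rw [← inv_smul_smul₀ hca'.ne' x, hx_eq, smul_add, smul_smul, smul_smul]
  refine convex_convexHull ℝ s hp hq (by positivity) (by positivity) ?_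
  rw [← mul_add, inv_mul_eq_one₀ hca'.ne']
  linear_combination -(c * hab) - hce

variable {d n : ℕ}

theorem toR_injective : Function.Injective (toR : (Fin d → Fin n) → Fin d → ℝ) := fun _ _ h =>
  funext fun i => Fin.ext (Nat.cast_injective (R := ℝ) (congrFun h i))

theorem latticeConvex_iff {f : (Fin d → Fin n) → Bool} :
    LatticeConvex f ↔ ∀ x, toR x ∈ hullOne d n f → f x = true :=
  ⟨fun hf x => (hf x).2, fun h x => ⟨fun hx => subset_convexHull ℝ _ ⟨x, hx, rfl⟩, h x⟩⟩

theorem essential_of_mem_vertSet {f : (Fin d → Fin n) → Bool} (hf : LatticeConvex f)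
    {v : Fin d → Fin n} (hv : v ∈ VertSet d n f) : Essential (TStar d n) f v := by
  classical
  have hfv : f v = true := (hf v).2 (extremePoints_subset hv)
  refine ⟨Function.update f v false, ?_, by simp [hfv],
    fun y hy => Function.update_of_ne hy _ _⟩
  have hones : {z | Function.update f v false z = true} = {z | f z = true} \ {v} := by
    ext z
    by_cases hz : z = v <;> simp [hz, hfv]
  refine latticeConvex_iff.2 fun x hx => ?_
  rw [hullOne, hones, image_sdiff toR_injective, image_singleton] at hx
  have hxv : x ≠ v := by
    rintro rfl
    exact notMem_convexHull_sdiff_of_mem_extremePoints hv hx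
  rw [Function.update_of_ne hxv]
  exact (hf x).2 (convexHull_mono sdiff_subset hx)

theorem essential_of_mem_dSet {f : (Fin d → Fin n) → Bool} {x₀ : Fin d → Fin n}
    (hx₀ : x₀ ∈ DSet d n f) : Essential (TStar d n) f x₀ := by
  classical
  obtain ⟨hfx₀, hD⟩ := hx₀
  refine ⟨Function.update f x₀ true, ?_, by simp [hfx₀],
    fun y hy => Function.update_of_ne hy _ _⟩
  have hones : {z | Function.update f x₀ true z = true} = insert x₀ {z | f z = true} := by
    ext z
    by_cases hz : z = x₀ <;> simp [hz]
  refine latticeConvex_iff.2 fun x hx => ?_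
  rw [hullOne, hones, image_insert_eq, ← union_singleton] at hx
  by_cases hxx₀ : x = x₀
  · simp [hxx₀]
  rw [Function.update_of_ne hxx₀]
  by_contra hfx
  exact hxx₀ (hD x hx (by simpa using hfx))

theorem apply_eq_true_of_eqOn_vertSet {f g : (Fin d → Fin n) → Bool} (hg : LatticeConvex g)
    (hfg : ∀ v ∈ VertSet d n f, g v = f v) {x : Fin d → Fin n} (hx : f x = true) :
    g x = true := by
  have hext : (hullOne d n f).extremePoints ℝ ⊆ toR '' {z | g z = true} := fun e he => by
    obtain ⟨v, hfv, rfl⟩ := extremePoints_convexHull_subset he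
    exact ⟨v, (hfg v he).trans hfv, rfl⟩
  refine (hg x).2 (convexHull_mono hext ?_)
  rw [hullOne, ((toFinite _).image toR).convexHull_extremePoints_convexHull]
  exact subset_convexHull ℝ _ ⟨x, hx, rfl⟩

theorem exists_mem_dSet_of_apply_eq_true {f g : (Fin d → Fin n) → Bool} (hf : LatticeConvex f)
    (hne : ∃ x, f x = true) (hg : LatticeConvex g) (hfg : ∀ x, f x = true → g x = true)
    {x : Fin d → Fin n} (hgx : g x = true) (hfx : f x = false) :
    ∃ y ∈ DSet d n f, g y = true := by
  set S := toR '' {z | f z = true}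
  obtain ⟨y, ⟨hgy, hfy⟩, hmin⟩ :=
    Finite.exists_minimalFor (fun y => convexHull ℝ (insert (toR y) S))
      {y | g y = true ∧ f y = false} (toFinite _) ⟨x, hgx, hfx⟩
  refine ⟨y, ⟨hfy, fun z hz hfz => ?_⟩, hgy⟩
  rw [union_singleton] at hz
  have hSg : insert (toR y) S ⊆ hullOne d n g :=
    insert_subset ((hg y).1 hgy) ((image_mono hfg).trans (subset_convexHull ℝ _))
  have hgz : g z = true :=
    (hg z).2 (convexHull_min hSg (convex_convexHull ℝ _) hz)
  have hzy : convexHull ℝ (insert (toR z) S) ⊆ convexHull ℝ (insert (toR y) S) :=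
    convexHull_min (insert_subset hz ((subset_insert _ _).trans (subset_convexHull ℝ _)))
      (convex_convexHull ℝ _)
  have hyz : toR y ∈ convexHull ℝ (insert (toR z) S) :=
    hmin ⟨hgz, hfz⟩ hzy (subset_convexHull ℝ _ (mem_insert _ _))
  have hyS : toR y ∉ convexHull ℝ S := fun h => by simp [(hf y).2 h] at hfy
  have hS : S.Nonempty := let ⟨w, hw⟩ := hne; ⟨toR w, w, hw, rfl⟩
  exact toR_injective (eq_of_mem_convexHull_insert hS hyS hz hyz).symm

theorem teachingSet_vertSet_union_dSet {f : (Fin d → Fin n) → Bool} (hf : LatticeConvex f)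
    (hne : ∃ x, f x = true) : TeachingSet (TStar d n) f (VertSet d n f ∪ DSet d n f) := by
  intro g hg hagree
  have hfg : ∀ x, f x = true → g x = true := fun _ =>
    apply_eq_true_of_eqOn_vertSet hg fun v hv => hagree v (Or.inl hv)
  funext x
  cases hfx : f x with
  | true => exact hfg x hfx
  | false =>
    by_contra hgx
    obtain ⟨y, hyD, hgy⟩ :=
      exists_mem_dSet_of_apply_eq_true hf hne hg hfg (by simpa using hgx) hfx
    have := hagree y (Or.inr hyD)
    simp [hgy, hyD.1] at this

theorem stmt8_general (d n : ℕ) (f : (Fin d → Fin n) → Bool)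
    (hf : f ∈ TStar d n) (hne : ∃ x, f x = true) :
    {x | Essential (TStar d n) f x} = VertSet d n f ∪ DSet d n f ∧
    TeachingSet (TStar d n) f (VertSet d n f ∪ DSet d n f) ∧
    (∀ T : Set (Fin d → Fin n), TeachingSet (TStar d n) f T →
      VertSet d n f ∪ DSet d n f ⊆ T) := by
  have hT := teachingSet_vertSet_union_dSet hf hne
  have hess : VertSet d n f ∪ DSet d n f ⊆ {x | Essential (TStar d n) f x} :=
    union_subset (fun _ hv => essential_of_mem_vertSet hf hv) fun _ hx => essential_of_mem_dSet hx
  exact ⟨Subset.antisymm (fun _ hx => hx.mem_of_teachingSet hT) hess, hT,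
    fun _ hT' => hess.trans fun _ hx => hx.mem_of_teachingSet hT'⟩

/-- For `f ∈ T(d,n,*)` with nonempty `1`-set, the set of essential points equals
`Vert(P(f)) ∪ D(f)`, and this set is the unique minimal teaching set: it is a
teaching set and is contained in every teaching set of `f`. -/
theorem stmt8 (d n : ℕ) (hd : 2 ≤ d) (hn : 2 ≤ n) (f : (Fin d → Fin n) → Bool)
    (hf : f ∈ TStar d n) (hne : ∃ x, f x = true) :
    {x | Essential (TStar d n) f x} = VertSet d n f ∪ DSet d n f ∧
    TeachingSet (TStar d n) f (VertSet d n f ∪ DSet d n f) ∧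
    (∀ T : Set (Fin d → Fin n), TeachingSet (TStar d n) f T →
      VertSet d n f ∪ DSet d n f ⊆ T) :=
  stmt8_general d n f hf hne
end

section
/- Every point x of the set D(f) = {x ∈ M_0(f) : Conv(P(f) ∪ {x}) ∩ M_0(f) = {x}} is an essential point of f with respect to T(d,n,*), for any f ∈ T(d,n,*) with M_1(f) ≠ ∅. -/
theorem stmt9 (d n : ℕ) (hd : 2 ≤ d) (hn : 2 ≤ n) (f : (Fin d → Fin n) → Bool)
    (hf : f ∈ TStar d n) (hne : ∃ x, f x = true) :
    ∀ x ∈ DSet d n f, Essential (TStar d n) f x := by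
  rintro x ⟨hx0, hxD⟩
  set g : (Fin d → Fin n) → Bool := fun y => if y = x then true else f y with hg
  have hset : {z | g z = true} = {z | f z = true} ∪ {x} := by
    ext z; by_cases h : z = x <;> simp [g, h]
  have hhull : hullOne d n g = convexHull ℝ (toR '' {z | f z = true} ∪ {toR x}) := by
    rw [hullOne, hset, Set.image_union, Set.image_singleton]
  refine ⟨g, ?_, ?_, ?_⟩
  · intro y
    rw [hhull]
    constructor
    · intro hy
      by_cases h : y = x
      · exact subset_convexHull ℝ _ (Or.inr (by rw [h]; rfl))
      · have hfy : f y = true := by simpa [g, h] using hy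
        exact subset_convexHull ℝ _ (Or.inl ⟨y, hfy, rfl⟩)
    · intro hy
      by_cases hfy : f y = true
      · simp [g, hfy]
      · have hyx := hxD y hy (by simpa using hfy)
        simp [g, hyx]
  · simp [g, hx0]
  · intro y hy; simp [g, hy]
end

section
/- Let d ≥ 2, k ≥ 2 and f ∈ T(d,n,k) with M_1(f) a single point. Then the cardinality of the minimal teaching set of f with respect to T(d,n,k) is Θ(n^d): there exist constants c_1, c_2 > 0 (depending only on d) such that for all sufficiently large n, c_1 n^d ≤ |S(f)| ≤ c_2 n^d. -/
def SingletonEssential (d n : ℕ) (x' : Fin d → Fin n) : Set (Fin d → Fin n) :=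
  {x'} ∪ {x | Finset.univ.gcd (fun j => ((x j : ℤ) - (x' j : ℤ)).natAbs) = 1}



open Finset in
lemma sum_inv_sq_le' : ∀ m : ℕ, 2 ≤ m → ∑ c ∈ Finset.Icc 2 m, (1:ℝ)/(c:ℝ)^2 ≤ 3/4 - 1/m := by
  intro m hm
  induction m, hm using Nat.le_induction with
  | base => norm_num
  | succ m hm ih =>
    rw [← Finset.Ico_add_one_right_eq_Icc, Finset.sum_Ico_succ_top (by omega), Finset.Ico_add_one_right_eq_Icc]
    have hm0 : (2:ℝ) ≤ (m:ℝ) := by exact_mod_cast hm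
    have h1 : (1:ℝ)/((m:ℝ)+1)^2 ≤ 1/m - 1/(m+1) := by
      rw [div_sub_div _ _ (by positivity) (by positivity)]
      rw [div_le_div_iff₀ (by positivity) (by positivity)]
      ring_nf
      nlinarith
    push_cast
    push_cast at ih
    linarith

open Finset in
lemma sum_inv_sq_le (m : ℕ) : ∑ c ∈ Finset.Icc 2 m, (1:ℝ)/(c:ℝ)^2 ≤ 3/4 := by
  rcases le_or_gt 2 m with h | h
  · have h1 := sum_inv_sq_le' m h
    have h2 : (0:ℝ) < 1/(m:ℝ) := by
      have : (0:ℝ) < (m:ℝ) := by exact_mod_cast (by omega : 0 < m)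
      positivity
    linarith
  · interval_cases m <;> norm_num

open Finset in
lemma coprime_pairs_card (m : ℕ) :
    (m:ℝ)^2/4 ≤ (((Icc 1 m ×ˢ Icc 1 m).filter (fun p => Nat.gcd p.1 p.2 = 1)).card : ℝ) := by
  set T := Icc 1 m ×ˢ Icc 1 m with hT
  have hTcard : T.card = m * m := by simp [hT, Nat.card_Icc]
  have hsub : T.filter (fun p => ¬ Nat.gcd p.1 p.2 = 1) ⊆
      (Icc 2 m).biUnion (fun c => ((Icc 1 m).filter (c ∣ ·)) ×ˢ ((Icc 1 m).filter (c ∣ ·))) := by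
    intro p hp
    simp only [hT, mem_filter, mem_product, mem_Icc] at hp
    obtain ⟨⟨⟨h11,h12⟩,⟨h21,h22⟩⟩, hg⟩ := hp
    have h0 : Nat.gcd p.1 p.2 ≠ 0 := by
      intro h; have := (Nat.gcd_eq_zero_iff.mp h).1; omega
    refine mem_biUnion.mpr ⟨Nat.gcd p.1 p.2, mem_Icc.mpr ⟨by omega, le_trans (Nat.le_of_dvd (by omega) (Nat.gcd_dvd_left _ _)) h12⟩, ?_⟩
    simp only [mem_product, mem_filter, mem_Icc]
    exact ⟨⟨⟨h11,h12⟩, Nat.gcd_dvd_left _ _⟩, ⟨⟨h21,h22⟩, Nat.gcd_dvd_right _ _⟩⟩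
  have hdivcard : ∀ c : ℕ, ((Icc 1 m).filter (c ∣ ·)).card = m / c := by
    intro c
    rw [show Icc 1 m = Ioc 0 m from Finset.Icc_add_one_left_eq_Ioc 0 m]
    exact Nat.Ioc_filter_dvd_card_eq_div m c
  have hBcard : (T.filter (fun p => ¬ Nat.gcd p.1 p.2 = 1)).card ≤ ∑ c ∈ Icc 2 m, (m / c) * (m / c) := by
    refine le_trans (card_le_card hsub) (le_trans (card_biUnion_le) ?_)
    refine Finset.sum_le_sum fun c _ => ?_
    rw [card_product, hdivcard]
  have hBreal : ((T.filter (fun p => ¬ Nat.gcd p.1 p.2 = 1)).card : ℝ) ≤ 3/4 * (m:ℝ)^2 := by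
    calc ((T.filter (fun p => ¬ Nat.gcd p.1 p.2 = 1)).card : ℝ)
        ≤ ∑ c ∈ Icc 2 m, ((m / c : ℕ) : ℝ) * ((m / c : ℕ) : ℝ) := by
          have := (Nat.cast_le (α := ℝ)).mpr hBcard
          push_cast at this
          exact this
      _ ≤ ∑ c ∈ Icc 2 m, (m:ℝ)^2 * ((1:ℝ)/(c:ℝ)^2) := by
          refine Finset.sum_le_sum fun c hc => ?_
          have hc2 : (2:ℕ) ≤ c := (mem_Icc.mp hc).1
          have hcpos : (0:ℝ) < (c:ℝ) := by positivity
          have h := Nat.cast_div_le (α := ℝ) (m := m) (n := c)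
          have h0 : (0:ℝ) ≤ ((m / c : ℕ) : ℝ) := by positivity
          calc ((m / c : ℕ) : ℝ) * ((m / c : ℕ) : ℝ) ≤ ((m:ℝ)/c) * ((m:ℝ)/c) :=
                mul_le_mul h h h0 (le_trans h0 h)
            _ = (m:ℝ)^2 * ((1:ℝ)/(c:ℝ)^2) := by field_simp
      _ = (m:ℝ)^2 * ∑ c ∈ Icc 2 m, (1:ℝ)/(c:ℝ)^2 := by rw [Finset.mul_sum]
      _ ≤ (m:ℝ)^2 * (3/4) := by
          refine mul_le_mul_of_nonneg_left (sum_inv_sq_le m) (by positivity)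
      _ = 3/4 * (m:ℝ)^2 := by ring
  have hsplit := Finset.card_filter_add_card_filter_not (s := T) (p := fun p => Nat.gcd p.1 p.2 = 1)
  have : ((T.filter (fun p => Nat.gcd p.1 p.2 = 1)).card : ℝ)
      = (m:ℝ)^2 - ((T.filter (fun p => ¬ Nat.gcd p.1 p.2 = 1)).card : ℝ) := by
    have : (T.filter (fun p => Nat.gcd p.1 p.2 = 1)).card + (T.filter (fun p => ¬ Nat.gcd p.1 p.2 = 1)).card = m * m := by
      rw [hsplit, hTcard]
    have := congrArg (fun x : ℕ => (x : ℝ)) this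
    push_cast at this
    linarith [this]
  rw [this]
  linarith

/-- Encoding: shift away from `x' i` by `min a m`, in whichever direction fits. -/
def Efun {d n : ℕ} (m : ℕ) (x' : Fin d → Fin n) (i : Fin d) (a : ℕ) : Fin n :=
  if h : (x' i : ℕ) + m < n then ⟨(x' i : ℕ) + min a m, by have := min_le_right a m; omega⟩
  else ⟨(x' i : ℕ) - min a m, by have := (x' i).isLt; omega⟩

lemma Efun_spec {d n : ℕ} (m : ℕ) (x' : Fin d → Fin n) (h2m : 2*m ≤ n)
    (i : Fin d) (a : ℕ) (ha : a ≤ m) :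
    (((Efun m x' i a : Fin n) : ℤ) - ((x' i : ℕ) : ℤ)).natAbs = a := by
  unfold Efun
  split
  · next h =>
    show ((((x' i : ℕ) + min a m : ℕ) : ℤ) - ((x' i : ℕ) : ℤ)).natAbs = a
    omega
  · next h =>
    show ((((x' i : ℕ) - min a m : ℕ) : ℤ) - ((x' i : ℕ) : ℤ)).natAbs = a
    omega

open Finset in
theorem lower_main (d n : ℕ) (hd : 2 ≤ d) (hn : 8 ≤ n) (x' : Fin d → Fin n) :
    (1/256 : ℝ) * (n : ℝ) ^ d ≤ ((SingletonEssential d n x').ncard : ℝ) := by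
  classical
  set m := n / 4 with hm
  have h2m : 2 * m ≤ n := by omega
  have hn8m : (n : ℕ) ≤ 8 * m := by omega
  set i0 : Fin d := ⟨0, by omega⟩ with hi0
  set i1 : Fin d := ⟨1, by omega⟩ with hi1
  have hne : i0 ≠ i1 := by simp [hi0, hi1, Fin.ext_iff]
  set P := ((Finset.Icc 1 m) ×ˢ (Finset.Icc 1 m)).filter (fun p => Nat.gcd p.1 p.2 = 1) with hP
  set D := P ×ˢ (Finset.univ : Finset ({j : Fin d // j ≠ i0 ∧ j ≠ i1} → Fin n)) with hD
  set Φ : (ℕ × ℕ) × ({j : Fin d // j ≠ i0 ∧ j ≠ i1} → Fin n) → (Fin d → Fin n) :=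
    fun p j => if h0 : j = i0 then Efun m x' i0 p.1.1
      else if h1 : j = i1 then Efun m x' i1 p.1.2
      else p.2 ⟨j, h0, h1⟩ with hΦ
  -- members of D have bounded coordinates
  have hmemD : ∀ p ∈ D, p.1.1 ∈ Finset.Icc 1 m ∧ p.1.2 ∈ Finset.Icc 1 m ∧ Nat.gcd p.1.1 p.1.2 = 1 := by
    intro p hp
    have h1 := (Finset.mem_product.mp hp).1
    rw [hP, Finset.mem_filter, Finset.mem_product] at h1
    exact ⟨h1.1.1, h1.1.2, h1.2⟩
  have hΦval : ∀ p ∈ D, ∀ i : Fin d,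
      ((Φ p i0 : ℤ) - ((x' i0 : ℕ) : ℤ)).natAbs = p.1.1 ∧
      ((Φ p i1 : ℤ) - ((x' i1 : ℕ) : ℤ)).natAbs = p.1.2 := by
    intro p hp i
    obtain ⟨ha, hb, -⟩ := hmemD p hp
    constructor
    · rw [hΦ]; simp only [dif_pos rfl]
      exact Efun_spec m x' h2m i0 p.1.1 (Finset.mem_Icc.mp ha).2
    · rw [hΦ]
      simp only [dif_neg (Ne.symm hne), dif_pos rfl]
      exact Efun_spec m x' h2m i1 p.1.2 (Finset.mem_Icc.mp hb).2
  have hinj : Set.InjOn Φ ↑D := by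
    intro p hp q hq h
    obtain ⟨hpa, hpb, -⟩ := hmemD p hp
    obtain ⟨hqa, hqb, -⟩ := hmemD q hq
    have e0 : p.1.1 = q.1.1 := by
      have := congrArg (fun x => ((x i0 : ℤ) - ((x' i0 : ℕ) : ℤ)).natAbs) h
      rwa [(hΦval p hp i0).1, (hΦval q hq i0).1] at this
    have e1 : p.1.2 = q.1.2 := by
      have := congrArg (fun x => ((x i1 : ℤ) - ((x' i1 : ℕ) : ℤ)).natAbs) h
      rwa [(hΦval p hp i1).2, (hΦval q hq i1).2] at this
    have e2 : p.2 = q.2 := by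
      funext j
      have := congrFun h j.1
      rw [hΦ] at this
      simp only [dif_neg j.2.1, dif_neg j.2.2] at this
      exact this
    exact Prod.ext (Prod.ext e0 e1) e2
  have himg : ↑(D.image Φ) ⊆ SingletonEssential d n x' := by
    intro x hx
    rw [Finset.coe_image] at hx
    obtain ⟨p, hp, rfl⟩ := hx
    obtain ⟨ha, hb, hg⟩ := hmemD p hp
    refine Set.mem_union_right _ ?_
    show Finset.univ.gcd (fun j => ((Φ p j : ℤ) - ((x' j : ℕ) : ℤ)).natAbs) = 1
    have d0 := Finset.gcd_dvd (Finset.mem_univ i0) (f := fun j => ((Φ p j : ℤ) - ((x' j : ℕ) : ℤ)).natAbs)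
    have d1 := Finset.gcd_dvd (Finset.mem_univ i1) (f := fun j => ((Φ p j : ℤ) - ((x' j : ℕ) : ℤ)).natAbs)
    rw [(hΦval p hp i0).1] at d0
    rw [(hΦval p hp i1).2] at d1
    have := Nat.dvd_gcd d0 d1
    rw [hg] at this
    exact Nat.dvd_one.mp this
  -- cardinality of the subtype
  have hR : Fintype.card {j : Fin d // j ≠ i0 ∧ j ≠ i1} = d - 2 := by
    rw [Fintype.card_subtype]
    have heq : (Finset.univ.filter fun j : Fin d => j ≠ i0 ∧ j ≠ i1) = Finset.univ \ {i0, i1} := by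
      ext j
      simp [not_or]
    rw [heq, Finset.card_sdiff_of_subset (Finset.subset_univ _), Finset.card_univ, Fintype.card_fin,
      Finset.card_insert_of_notMem (by simpa using hne), Finset.card_singleton]
  have hDcard : D.card = P.card * n ^ (d - 2) := by
    rw [hD, Finset.card_product, Finset.card_univ, Fintype.card_fun, hR, Fintype.card_fin]
  have hcard : P.card * n ^ (d - 2) ≤ (SingletonEssential d n x').ncard := by
    calc P.card * n ^ (d - 2) = D.card := hDcard.symm
      _ = (D.image Φ).card := (Finset.card_image_of_injOn hinj).symm
      _ = (↑(D.image Φ) : Set _).ncard := (Set.ncard_coe_finset _).symm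
      _ ≤ (SingletonEssential d n x').ncard := Set.ncard_le_ncard himg (Set.toFinite _)
  -- numeric conclusion
  have hPc := coprime_pairs_card m
  have hnm : (n : ℝ) ≤ 8 * (m : ℝ) := by exact_mod_cast hn8m
  have hn0 : (0:ℝ) ≤ (n:ℝ) := by positivity
  have hpow : (n:ℝ) ^ d = (n:ℝ)^2 * (n:ℝ)^(d-2) := by
    rw [← pow_add]
    congr 1
    omega
  have hbound : (1/256 : ℝ) * (n : ℝ) ^ d ≤ (P.card : ℝ) * (n:ℝ)^(d-2) := by
    rw [hpow]
    have hsq : (n:ℝ)^2 ≤ 64 * (m:ℝ)^2 := by nlinarith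
    have h1 : (1/256 : ℝ) * ((n:ℝ)^2 * (n:ℝ)^(d-2)) = ((n:ℝ)^2/256) * (n:ℝ)^(d-2) := by ring
    rw [h1]
    refine mul_le_mul_of_nonneg_right ?_ (by positivity)
    calc (n:ℝ)^2/256 ≤ (64 * (m:ℝ)^2)/256 := by linarith
      _ = (m:ℝ)^2/4 := by ring
      _ ≤ (P.card : ℝ) := hPc
  calc (1/256 : ℝ) * (n : ℝ) ^ d ≤ (P.card : ℝ) * (n:ℝ)^(d-2) := hbound
    _ = ((P.card * n ^ (d-2) : ℕ) : ℝ) := by push_cast; ring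
    _ ≤ ((SingletonEssential d n x').ncard : ℝ) := by exact_mod_cast hcard

/-- The minimal teaching set `S(f)` of a `k`-threshold function with a singleton
`1`-set has cardinality `Θ(n^d)`. -/
theorem stmt11 (d k : ℕ) (hd : 2 ≤ d) (hk : 2 ≤ k) :
    ∃ c₁ c₂ : ℝ, 0 < c₁ ∧ 0 < c₂ ∧ ∃ N : ℕ, ∀ n, N ≤ n →
      ∀ f : (Fin d → Fin n) → Bool, IsKThreshold d n k f →
      ∀ x' : Fin d → Fin n, (∀ y, f y = true ↔ y = x') →
        c₁ * (n : ℝ) ^ d ≤ ((SingletonEssential d n x').ncard : ℝ) ∧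
        ((SingletonEssential d n x').ncard : ℝ) ≤ c₂ * (n : ℝ) ^ d := by
  refine ⟨1/256, 1, by norm_num, by norm_num, 8, ?_⟩
  intro n hn f _ x' _
  constructor
  · exact lower_main d n hd hn x'
  · have h1 : (SingletonEssential d n x').ncard ≤ (Set.univ : Set (Fin d → Fin n)).ncard :=
      Set.ncard_le_ncard (Set.subset_univ _) Set.finite_univ
    have h2 : (Set.univ : Set (Fin d → Fin n)).ncard = n ^ d := by
      classical
      rw [Set.ncard_univ, Nat.card_eq_fintype_card, Fintype.card_fun, Fintype.card_fin,
        Fintype.card_fin]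
    rw [h2] at h1
    calc ((SingletonEssential d n x').ncard : ℝ) ≤ ((n ^ d : ℕ) : ℝ) := by exact_mod_cast h1
      _ = 1 * (n:ℝ)^d := by push_cast; ring
end

section
/- There is a constant c > 0 such that for infinitely many n there exists a 2-threshold function f on E_n^2 having at least c·n² distinct minimal teaching sets with respect to the class T(2,n,2) of 2-threshold functions. -/
/-!
The witness is the domino `{(r, r), (r, r + 1)}` in `E_n²`, `n = 2r + 2`. Let `S` and `S'` be
the width-two half-strips leaving the domino to the right along the antidiagonal and along the
diagonal. A set cut out by two half-planes that contains the domino, avoids six lattice points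
next to it, and meets `S` must contain all of `S`: both half-planes are forced to be
non-increasing in the direction `(1, -1)`, by a chain of midpoint arguments (if `x + x' = u + u'`
with `u, u'` in a half-plane, then `x` or `x'` lies in it). The same holds for `S'` after the
reflection fixing the domino. So for `p ∈ S`, `q ∈ S'` the complement of `S ∪ S'` together with
`p` and `q` is a teaching set of the domino, and each of its minimal teaching subsets contains
both `p` and `q`, since the domino extended by `S` or by `S'` is again 2-threshold. This gives
`|S| · |S'| ≥ (r + 1)² = n² / 4` distinct minimal teaching sets.
-/

open Function

section TeachingSets

variable {α : Type*} {C : Set (α → Bool)} {f : α → Bool}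

theorem TeachingSet.inter_nonempty {T P : Set α} (hT : TeachingSet C f T) {g : α → Bool}
    (hg : g ∈ C) (hgf : g ≠ f) (hP : ∀ x ∉ P, g x = f x) : (T ∩ P).Nonempty := by
  by_contra h
  exact hgf (hT g hg fun x hx => hP x fun hxP => h ⟨x, hx, hxP⟩)

theorem TeachingSet.exists_minimal_subset [Finite α] {T : Set α} (hT : TeachingSet C f T) :
    ∃ T' ⊆ T, TeachingSet C f T' ∧ ∀ T'' ⊂ T', ¬ TeachingSet C f T'' := by
  obtain ⟨T', hT'T, hmin⟩ := exists_minimal_le_of_wellFoundedLT (TeachingSet C f) T hT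
  exact ⟨T', hT'T, hmin.prop, fun _ h => hmin.not_prop_of_ssubset h⟩

theorem ncard_mul_ncard_le_ncard_minimal_teachingSets [Finite α] {P Q : Set α}
    (hPQ : Disjoint P Q) (hteach : ∀ p ∈ P, ∀ q ∈ Q, TeachingSet C f ((P ∪ Q)ᶜ ∪ {p, q}))
    (hP : ∃ g ∈ C, g ≠ f ∧ ∀ x ∉ P, g x = f x) (hQ : ∃ g ∈ C, g ≠ f ∧ ∀ x ∉ Q, g x = f x) :
    P.ncard * Q.ncard ≤ {T | TeachingSet C f T ∧ ∀ T' ⊂ T, ¬ TeachingSet C f T'}.ncard := by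
  obtain ⟨gP, hgP, hgPf, hPf⟩ := hP
  obtain ⟨gQ, hgQ, hgQf, hQf⟩ := hQ
  choose Φ hΦT hΦ hΦmin using fun pq : P × Q =>
    (hteach pq.1 pq.1.2 pq.2 pq.2.2).exists_minimal_subset
  have hΦP (pq : P × Q) : ∀ x ∈ Φ pq ∩ P, x = pq.1 := by
    rintro x ⟨hx, hxP⟩
    rcases hΦT pq hx with h | h | h
    · exact absurd (Or.inl hxP) h
    · exact h
    · exact absurd (h ▸ pq.2.2) (hPQ.notMem_of_mem_left hxP)
  have hΦQ (pq : P × Q) : ∀ x ∈ Φ pq ∩ Q, x = pq.2 := by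
    rintro x ⟨hx, hxQ⟩
    rcases hΦT pq hx with h | h | h
    · exact absurd (Or.inr hxQ) h
    · exact absurd (h ▸ pq.1.2) (hPQ.notMem_of_mem_right hxQ)
    · exact h
  have hinj : Injective fun pq => (⟨Φ pq, hΦ pq, hΦmin pq⟩ :
      {T | TeachingSet C f T ∧ ∀ T' ⊂ T, ¬ TeachingSet C f T'}) := by
    intro pq pq' h
    have h : Φ pq = Φ pq' := congrArg Subtype.val h
    obtain ⟨x, hx⟩ := (hΦ pq).inter_nonempty hgP hgPf hPf
    obtain ⟨y, hy⟩ := (hΦ pq).inter_nonempty hgQ hgQf hQf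
    refine Prod.ext (Subtype.ext ?_) (Subtype.ext ?_)
    · rw [← hΦP pq x hx, hΦP pq' x (h ▸ hx)]
    · rw [← hΦQ pq y hy, hΦQ pq' y (h ▸ hy)]
  calc P.ncard * Q.ncard = Nat.card (P × Q) := by
        rw [Nat.card_prod, Nat.card_coe_set_eq, Nat.card_coe_set_eq]
    _ ≤ _ := (Nat.card_le_card_of_injective _ hinj).trans_eq (Nat.card_coe_set_eq _)

end TeachingSets

section Wedge

variable {G : Type*} [AddCommGroup G] {ℓ m : G →+ ℝ} {c d : ℝ}

def halfStrip (o f v : G) : Set G :=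
  {x | ∃ k : ℤ, 1 ≤ k ∧ (x = o + k • v ∨ x = o + f + k • v)}

/-- `W` contains the domino `{o, o + f}` but, writing `(i, j)` for `o + i • e + j • f`, none of
`(-1, 1)`, `(-1, 2)`, `(0, -1)`, `(0, 2)`, `(1, -2)`, `(2, 1)`. -/
structure DominoCorner (W : Set G) (o e f : G) : Prop where
  origin_mem : o ∈ W
  top_mem : o + f ∈ W
  notMem_left : o - e + f ∉ W
  notMem_upper_left : o - e + 2 • f ∉ W
  notMem_below : o - f ∉ W
  notMem_above : o + 2 • f ∉ W
  notMem_lower_right : o + e - 2 • f ∉ W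
  notMem_right : o + 2 • e + f ∉ W

theorem add_mem_of_add_zsmul_mem {x v : G} {k : ℤ} (hk : 1 ≤ k)
    (hx : x ∈ {x | ℓ x ≤ c} ∩ {x | m x ≤ d}) (hxv : x + k • v ∈ {x | ℓ x ≤ c} ∩ {x | m x ≤ d}) :
    x + v ∈ {x | ℓ x ≤ c} ∩ {x | m x ≤ d} := by
  have hk' : (1 : ℝ) ≤ k := by exact_mod_cast hk
  simp only [Set.mem_inter_iff, Set.mem_ofPred_eq, map_add, map_zsmul, zsmul_eq_mul] at *
  constructor
  · rcases le_total (ℓ v) 0 with h | h <;> nlinarith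
  · rcases le_total (m v) 0 with h | h <;> nlinarith

theorem DominoCorner.map_sub_nonpos {o e f : G}
    (hW : DominoCorner ({x | ℓ x ≤ c} ∩ {x | m x ≤ d}) o e f)
    (hseed : ℓ (o + e - f) ≤ c ∨ ℓ (o + e) ≤ c) : ℓ (e - f) ≤ 0 := by
  obtain ⟨hO, hT, hL, hUL, hB, hA, hLR, hR⟩ := hW
  simp only [Set.mem_inter_iff, Set.mem_ofPred_eq, not_and, not_le, map_add, map_sub, map_nsmul,
    nsmul_eq_mul, Nat.cast_ofNat] at *
  by_contra! hα
  -- Each excluded point is pushed beyond `ℓ = c` or beyond `m = d` in turn, using identities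
  -- `x + x' = u + u'` between the points, e.g. `(o + e - 2f) + (o - e + 2f) = o + o`.
  have hL' := hL (by linarith)
  have hUL' := hUL (by linarith)
  have hR' : c < ℓ o + 2 * ℓ e + ℓ f := by by_contra! h; linarith [hR h]
  have hLR' : c < ℓ o + ℓ e - 2 * ℓ f := by by_contra! h; linarith [hLR h]
  have hA' := hA (by rcases hseed with h | h <;> linarith)
  have hB' : c < ℓ o - ℓ f := by by_contra! h; linarith [hB h]
  have hE : ℓ o + ℓ e ≤ c := by rcases hseed with h | h <;> linarith
  -- `(o + 2e + f) + (o - f) = (o + e) + (o + e)`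
  linarith

theorem DominoCorner.halfStrip_subset {o e f : G}
    (hW : DominoCorner ({x | ℓ x ≤ c} ∩ {x | m x ≤ d}) o e f)
    (hmeet : (({x | ℓ x ≤ c} ∩ {x | m x ≤ d}) ∩ halfStrip o f (e - f)).Nonempty) :
    halfStrip o f (e - f) ⊆ {x | ℓ x ≤ c} ∩ {x | m x ≤ d} := by
  obtain ⟨x, hxW, k, hk, hx⟩ := hmeet
  have hseed : o + e - f ∈ {x | ℓ x ≤ c} ∩ {x | m x ≤ d} ∨
      o + e ∈ {x | ℓ x ≤ c} ∩ {x | m x ≤ d} := by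
    rcases hx with rfl | rfl
    · left
      simpa [add_sub_assoc] using add_mem_of_add_zsmul_mem hk hW.origin_mem hxW
    · right
      simpa using add_mem_of_add_zsmul_mem hk hW.top_mem hxW
  have hℓ := hW.map_sub_nonpos (hseed.imp And.left And.left)
  have hm := (Set.inter_comm _ _ ▸ hW).map_sub_nonpos (hseed.imp And.right And.right)
  have ho := hW.origin_mem
  have hf := hW.top_mem
  rintro y ⟨j, hj, rfl | rfl⟩ <;>
  · simp only [Set.mem_inter_iff, Set.mem_ofPred_eq, map_add, map_zsmul, zsmul_eq_mul] at *
    have hj' : (0 : ℝ) ≤ j := by exact_mod_cast (by omega : (0 : ℤ) ≤ j)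
    constructor <;> nlinarith

end Wedge

section Grid

variable {n : ℕ}

def coords (x : Fin 2 → Fin n) : ℤ × ℤ := ((x 0 : ℕ), (x 1 : ℕ))

theorem exists_coords_eq {z : ℤ × ℤ} (h₁ : 0 ≤ z.1) (h₁' : z.1 < n) (h₂ : 0 ≤ z.2)
    (h₂' : z.2 < n) : ∃ x : Fin 2 → Fin n, coords x = z :=
  ⟨![⟨z.1.toNat, by omega⟩, ⟨z.2.toNat, by omega⟩],
    Prod.ext (by simp [coords, h₁]) (by simp [coords, h₂])⟩

open scoped Classical in
noncomputable def gridFun (n : ℕ) (A : Set (ℤ × ℤ)) (x : Fin 2 → Fin n) : Bool :=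
  decide (coords x ∈ A)

@[simp]
theorem gridFun_eq_true {A : Set (ℤ × ℤ)} {x : Fin 2 → Fin n} :
    gridFun n A x = true ↔ coords x ∈ A := by
  simp [gridFun]

theorem isKThreshold_gridFun {A : Set (ℤ × ℤ)} (a₀ b₀ c₀ a₁ b₁ c₁ : ℤ)
    (h : ∀ X Y : ℤ, 0 ≤ X → X < n → 0 ≤ Y → Y < n →
      ((X, Y) ∈ A ↔ a₀ * X + b₀ * Y ≤ c₀ ∧ a₁ * X + b₁ * Y ≤ c₁)) :
    IsKThreshold 2 n 2 (gridFun n A) := by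
  refine ⟨![c₀, c₁], ![![a₀, b₀], ![a₁, b₁]], fun x => ?_⟩
  rw [gridFun_eq_true, coords, h _ _ (by omega) (by omega) (by omega) (by omega),
    Fin.forall_fin_two]
  simp only [Fin.sum_univ_two, Matrix.cons_val_zero, Matrix.cons_val_one]
  norm_cast

theorem IsKThreshold.exists_wedge {g : (Fin 2 → Fin n) → Bool} (hg : IsKThreshold 2 n 2 g) :
    ∃ (ℓ m : ℤ × ℤ →+ ℝ) (c d : ℝ),
      ∀ x, g x = true ↔ coords x ∈ {z | ℓ z ≤ c} ∩ {z | m z ≤ d} := by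
  obtain ⟨a, b, hg⟩ := hg
  let form (i : Fin 2) : ℤ × ℤ →+ ℝ :=
    AddMonoidHom.mk' (fun z => b i 0 * z.1 + b i 1 * z.2) fun z w => by
      simp only [Prod.fst_add, Prod.snd_add, Int.cast_add]
      ring
  refine ⟨form 0, form 1, a 0, a 1, fun x => ?_⟩
  rw [hg, Fin.forall_fin_two]
  simp [form, coords, Fin.sum_univ_two]

/-- The half-planes realizing the witnesses below have slopes of order `1 / n`; on the grid they
compare `(s, t)` lexicographically. -/
theorem lex_nonneg_of_mul_add_nonneg {N s t : ℤ} (ht : |t| < N) (h : 0 ≤ N * s + t) :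
    0 < s ∨ s = 0 ∧ 0 ≤ t := by
  obtain ⟨ht₁, ht₂⟩ := abs_lt.1 ht
  rcases lt_trichotomy s 0 with hs | rfl | hs
  · nlinarith [mul_le_mul_of_nonneg_left (show s ≤ -1 by omega) (show 0 ≤ N by omega)]
  · simpa using h
  · exact Or.inl hs

end Grid

namespace Domino

variable (r : ℕ)

def dominoSet : Set (ℤ × ℤ) := {z | z.1 = r ∧ (z.2 = r ∨ z.2 = r + 1)}

def antidiagStrip : Set (ℤ × ℤ) :=
  {z | r < z.1 ∧ (z.1 + z.2 = 2 * r ∨ z.1 + z.2 = 2 * r + 1)}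

def diagStrip : Set (ℤ × ℤ) := {z | r < z.1 ∧ (z.2 = z.1 ∨ z.2 = z.1 + 1)}

theorem antidiagStrip_eq_halfStrip :
    antidiagStrip r = halfStrip ((r : ℤ), (r : ℤ)) (0, 1) ((1, 0) - (0, 1)) := by
  ext ⟨a, b⟩
  simp only [antidiagStrip, halfStrip, Set.mem_ofPred_eq, Prod.ext_iff, Prod.fst_add,
    Prod.snd_add, Prod.smul_fst, Prod.smul_snd, Prod.fst_sub, Prod.snd_sub, smul_eq_mul]
  constructor
  · rintro ⟨h₁, h₂⟩
    exact ⟨a - r, by omega, by omega⟩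
  · rintro ⟨k, hk, h⟩
    omega

theorem diagStrip_eq_halfStrip :
    diagStrip r = halfStrip ((r : ℤ), (r + 1 : ℤ)) (0, -1) ((1, 0) - (0, -1)) := by
  ext ⟨a, b⟩
  simp only [diagStrip, halfStrip, Set.mem_ofPred_eq, Prod.ext_iff, Prod.fst_add,
    Prod.snd_add, Prod.smul_fst, Prod.smul_snd, Prod.fst_sub, Prod.snd_sub, smul_eq_mul]
  constructor
  · rintro ⟨h₁, h₂⟩
    exact ⟨a - r, by omega, by omega⟩
  · rintro ⟨k, hk, h⟩
    omega

theorem disjoint_dominoSet_antidiagStrip : Disjoint (dominoSet r) (antidiagStrip r) :=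
  Set.disjoint_left.2 fun _ h h' => by
    simp only [dominoSet, antidiagStrip, Set.mem_ofPred_eq] at h h'
    omega

theorem disjoint_dominoSet_diagStrip : Disjoint (dominoSet r) (diagStrip r) :=
  Set.disjoint_left.2 fun _ h h' => by
    simp only [dominoSet, diagStrip, Set.mem_ofPred_eq] at h h'
    omega

theorem disjoint_antidiagStrip_diagStrip : Disjoint (antidiagStrip r) (diagStrip r) :=
  Set.disjoint_left.2 fun _ h h' => by
    simp only [antidiagStrip, diagStrip, Set.mem_ofPred_eq] at h h'
    omega

theorem isKThreshold_dominoSet : IsKThreshold 2 (2 * r + 2) 2 (gridFun _ (dominoSet r)) := by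
  refine isKThreshold_gridFun (2 * r + 2) (-1) ((2 * r + 2) * r - r) (-(2 * r + 2)) 1
    (r + 1 - (2 * r + 2) * r) fun X Y hX hX' hY hY' => ?_
  simp only [dominoSet, Set.mem_ofPred_eq]
  constructor
  · rintro ⟨rfl, rfl | rfl⟩ <;> constructor <;> linarith
  · rintro ⟨h₁, h₂⟩
    have := lex_nonneg_of_mul_add_nonneg (N := 2 * r + 2) (s := r - X) (t := Y - r)
      (abs_lt.2 ⟨by omega, by omega⟩) (by linarith)
    have := lex_nonneg_of_mul_add_nonneg (N := 2 * r + 2) (s := X - r) (t := r + 1 - Y)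
      (abs_lt.2 ⟨by omega, by omega⟩) (by linarith)
    omega

theorem isKThreshold_dominoSet_union_antidiagStrip :
    IsKThreshold 2 (2 * r + 2) 2 (gridFun _ (dominoSet r ∪ antidiagStrip r)) := by
  refine isKThreshold_gridFun (-(2 * r + 3)) (-(2 * r + 2)) (-(2 * r + 2) * (2 * r) - r)
    (2 * r + 1) (2 * r + 2) ((2 * r + 2) * (2 * r + 1) - r) fun X Y hX hX' hY hY' => ?_
  simp only [dominoSet, antidiagStrip, Set.mem_union, Set.mem_ofPred_eq]
  constructor
  · rintro (⟨rfl, rfl | rfl⟩ | ⟨h₁, h₂ | h₂⟩) <;> constructor <;> nlinarith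
  · rintro ⟨h₁, h₂⟩
    have := lex_nonneg_of_mul_add_nonneg (N := 2 * r + 2) (s := X + Y - 2 * r) (t := X - r)
      (abs_lt.2 ⟨by omega, by omega⟩) (by linarith)
    have := lex_nonneg_of_mul_add_nonneg (N := 2 * r + 2) (s := 2 * r + 1 - X - Y) (t := X - r)
      (abs_lt.2 ⟨by omega, by omega⟩) (by linarith)
    omega

theorem isKThreshold_dominoSet_union_diagStrip :
    IsKThreshold 2 (2 * r + 2) 2 (gridFun _ (dominoSet r ∪ diagStrip r)) := by
  refine isKThreshold_gridFun (2 * r + 1) (-(2 * r + 2)) (-r) (-(2 * r + 3)) (2 * r + 2)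
    (2 * r + 2 - r) fun X Y hX hX' hY hY' => ?_
  simp only [dominoSet, diagStrip, Set.mem_union, Set.mem_ofPred_eq]
  constructor
  · rintro (⟨rfl, rfl | rfl⟩ | ⟨h₁, h₂ | h₂⟩) <;> constructor <;> nlinarith
  · rintro ⟨h₁, h₂⟩
    have := lex_nonneg_of_mul_add_nonneg (N := 2 * r + 2) (s := Y - X) (t := X - r)
      (abs_lt.2 ⟨by omega, by omega⟩) (by linarith)
    have := lex_nonneg_of_mul_add_nonneg (N := 2 * r + 2) (s := 1 - Y + X) (t := X - r)
      (abs_lt.2 ⟨by omega, by omega⟩) (by linarith)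
    omega

theorem dominoCorner_of_agree (hr : 2 ≤ r) {W : Set (ℤ × ℤ)}
    (hW : ∀ z : ℤ × ℤ, 0 ≤ z.1 → z.1 < 2 * r + 2 → 0 ≤ z.2 → z.2 < 2 * r + 2 →
      z ∉ antidiagStrip r → z ∉ diagStrip r → (z ∈ W ↔ z ∈ dominoSet r)) :
    DominoCorner W ((r : ℤ), (r : ℤ)) (1, 0) (0, 1) ∧
      DominoCorner W ((r : ℤ), (r + 1 : ℤ)) (1, 0) (0, -1) := by
  simp only [dominoSet, antidiagStrip, diagStrip, Set.mem_ofPred_eq] at hW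
  refine ⟨⟨?_, ?_, ?_, ?_, ?_, ?_, ?_, ?_⟩, ⟨?_, ?_, ?_, ?_, ?_, ?_, ?_, ?_⟩⟩ <;>
  · simp -failIfUnchanged only [Prod.mk_add_mk, Prod.mk_sub_mk, two_nsmul]
    rw [hW _ (by dsimp only; omega) (by dsimp only; omega) (by dsimp only; omega)
      (by dsimp only; omega) (by dsimp only; omega) (by dsimp only; omega)]
    dsimp only
    omega

theorem gridFun_dominoSet_eq_false {x : Fin 2 → Fin (2 * r + 2)}
    (hx : coords x ∈ antidiagStrip r ∪ diagStrip r) : gridFun _ (dominoSet r) x = false := by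
  rw [Bool.eq_false_iff, ne_eq, gridFun_eq_true]
  exact fun h => hx.elim (disjoint_dominoSet_antidiagStrip r |>.notMem_of_mem_left h)
    (disjoint_dominoSet_diagStrip r |>.notMem_of_mem_left h)

theorem teachingSet_dominoSet (hr : 2 ≤ r) {p q : Fin 2 → Fin (2 * r + 2)}
    (hp : coords p ∈ antidiagStrip r) (hq : coords q ∈ diagStrip r) :
    TeachingSet (TClass 2 (2 * r + 2) 2) (gridFun _ (dominoSet r))
      ((coords ⁻¹' antidiagStrip r ∪ coords ⁻¹' diagStrip r)ᶜ ∪ {p, q}) := by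
  intro g hg hagree
  obtain ⟨ℓ, m, c, d, hgW⟩ := IsKThreshold.exists_wedge hg
  obtain ⟨hanti, hdiag⟩ := dominoCorner_of_agree r hr fun z h₁ h₁' h₂ h₂' hA hD => by
    obtain ⟨x, rfl⟩ := exists_coords_eq h₁ h₁' h₂ h₂'
    rw [← hgW, hagree x (Or.inl fun h => h.elim hA hD), gridFun_eq_true]
  have hgp : g p = false := by
    rw [hagree p (by simp), gridFun_dominoSet_eq_false r (.inl hp)]
  have hgq : g q = false := by
    rw [hagree q (by simp), gridFun_dominoSet_eq_false r (.inr hq)]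
  have rigid {A : Set (ℤ × ℤ)} {o e f : ℤ × ℤ}
      (hW : DominoCorner ({z | ℓ z ≤ c} ∩ {z | m z ≤ d}) o e f) (hA : A = halfStrip o f (e - f))
      {y : Fin 2 → Fin (2 * r + 2)} (hy : coords y ∈ A) (hgy : g y = false)
      (x : Fin 2 → Fin (2 * r + 2)) (hx : coords x ∈ A) : g x = false := by
    subst hA
    rw [Bool.eq_false_iff, ne_eq, hgW] at hgy ⊢
    exact fun hgx => hgy (hW.halfStrip_subset ⟨_, hgx, hx⟩ hy)
  funext x
  by_cases hxA : coords x ∈ antidiagStrip r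
  · rw [gridFun_dominoSet_eq_false r (.inl hxA)]
    exact rigid hanti (antidiagStrip_eq_halfStrip r) hp hgp x hxA
  by_cases hxD : coords x ∈ diagStrip r
  · rw [gridFun_dominoSet_eq_false r (.inr hxD)]
    exact rigid hdiag (diagStrip_eq_halfStrip r) hq hgq x hxD
  exact hagree x (Or.inl fun h => h.elim hxA hxD)

theorem le_ncard_antidiagStrip :
    r + 1 ≤ (coords ⁻¹' antidiagStrip r : Set (Fin 2 → Fin (2 * r + 2))).ncard := by
  let pt (k : Fin (r + 1)) : Fin 2 → Fin (2 * r + 2) :=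
    ![⟨r + 1 + k, by omega⟩, ⟨r - k, by omega⟩]
  have hinj : Injective pt := fun k k' h => Fin.ext (by simpa [pt] using congrFun h 0)
  have hpt (k) : pt k ∈ coords ⁻¹' antidiagStrip r := by
    simp [antidiagStrip, coords, pt]
    omega
  calc r + 1 = (Set.range pt).ncard := by simp [Set.ncard_range_of_injective hinj]
    _ ≤ _ := Set.ncard_le_ncard (Set.range_subset_iff.2 hpt)

theorem le_ncard_diagStrip :
    r + 1 ≤ (coords ⁻¹' diagStrip r : Set (Fin 2 → Fin (2 * r + 2))).ncard := by
  let pt (k : Fin (r + 1)) : Fin 2 → Fin (2 * r + 2) :=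
    ![⟨r + 1 + k, by omega⟩, ⟨r + 1 + k, by omega⟩]
  have hinj : Injective pt := fun k k' h => Fin.ext (by simpa [pt] using congrFun h 0)
  have hpt (k) : pt k ∈ coords ⁻¹' diagStrip r := by
    simp [diagStrip, coords, pt]
    omega
  calc r + 1 = (Set.range pt).ncard := by simp [Set.ncard_range_of_injective hinj]
    _ ≤ _ := Set.ncard_le_ncard (Set.range_subset_iff.2 hpt)

theorem exists_ne_eqOn_compl {A : Set (ℤ × ℤ)} (hA : Disjoint (dominoSet r) A)
    (hth : IsKThreshold 2 (2 * r + 2) 2 (gridFun _ (dominoSet r ∪ A)))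
    (hne : (coords ⁻¹' A : Set (Fin 2 → Fin (2 * r + 2))).Nonempty) :
    ∃ g ∈ TClass 2 (2 * r + 2) 2, g ≠ gridFun _ (dominoSet r) ∧
      ∀ x ∉ coords ⁻¹' A, g x = gridFun _ (dominoSet r) x := by
  obtain ⟨p, hp⟩ := hne
  refine ⟨_, hth, fun h => ?_, fun x hx => ?_⟩
  · have hgp : gridFun _ (dominoSet r ∪ A) p = true := gridFun_eq_true.2 (.inr hp)
    rw [h, gridFun_eq_true] at hgp
    exact hA.notMem_of_mem_right hp hgp
  · simp [gridFun, Set.mem_preimage.not.1 hx]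

theorem sq_le_ncard_minimal_teachingSets (hr : 2 ≤ r) :
    (r + 1) ^ 2 ≤ {T | TeachingSet (TClass 2 (2 * r + 2) 2) (gridFun _ (dominoSet r)) T ∧
      ∀ T' ⊂ T, ¬ TeachingSet (TClass 2 (2 * r + 2) 2) (gridFun _ (dominoSet r)) T'}.ncard := by
  have hanti := le_ncard_antidiagStrip r
  have hdiag := le_ncard_diagStrip r
  calc (r + 1) ^ 2 ≤ _ * _ := by rw [sq]; exact Nat.mul_le_mul hanti hdiag
    _ ≤ _ := ncard_mul_ncard_le_ncard_minimal_teachingSets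
      ((disjoint_antidiagStrip_diagStrip r).preimage coords)
      (fun p hp q hq => teachingSet_dominoSet r hr hp hq)
      (exists_ne_eqOn_compl r (disjoint_dominoSet_antidiagStrip r)
        (isKThreshold_dominoSet_union_antidiagStrip r) (Set.nonempty_of_ncard_ne_zero (by omega)))
      (exists_ne_eqOn_compl r (disjoint_dominoSet_diagStrip r)
        (isKThreshold_dominoSet_union_diagStrip r) (Set.nonempty_of_ncard_ne_zero (by omega)))

end Domino

/-- There are 2-threshold functions on `E_n²` with `Ω(n²)` distinct minimal
teaching sets with respect to `T(2,n,2)`, for infinitely many `n`. -/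
theorem stmt19 :
    ∃ c : ℝ, 0 < c ∧ ∀ N : ℕ, ∃ n, N ≤ n ∧
      ∃ f : (Fin 2 → Fin n) → Bool, IsKThreshold 2 n 2 f ∧
        c * (n : ℝ) ^ 2 ≤
          (({T : Set (Fin 2 → Fin n) | TeachingSet (TClass 2 n 2) f T ∧
            ∀ T' ⊂ T, ¬ TeachingSet (TClass 2 n 2) f T'}).ncard : ℝ) := by
  refine ⟨1 / 4, by norm_num, fun N => ⟨2 * (N + 2) + 2, by omega,
    gridFun _ (Domino.dominoSet (N + 2)), Domino.isKThreshold_dominoSet _, ?_⟩⟩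
  have h := Domino.sq_le_ncard_minimal_teachingSets (N + 2) (by omega)
  calc (1 / 4 : ℝ) * ((2 * (N + 2) + 2 : ℕ) : ℝ) ^ 2 = ((N + 2 + 1) ^ 2 : ℕ) := by
        push_cast; ring
    _ ≤ _ := by exact_mod_cast h
end
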